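/- Let (T,d) be a rooted real tree with root ρ and most recent common ancestor operation ∧. Define d^{(1)}(σ,σ') = log(d(ρ,σ)+1) + log(d(ρ,σ')+1) − 2 log(d(ρ, σ∧σ')+1). Then d^{(1)} is a metric on T. -/

import Mathlib

noncomputable def distOne {T : Type*} [MetricSpace T] (ρ : T) (mrca : T → T → T)
    (σ σ' : T) : ℝ :=
  Real.log (dist ρ σ + 1) + Real.log (dist ρ σ' + 1)
    - 2 * Real.log (dist ρ (mrca σ σ') + 1)

/-!
Write `|σ| = d(ρ, σ)`. In a tree `|σ ∧ σ'|` is the Gromov product `(σ | σ')_ρ`, which is at most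
`min |σ| |σ'|`, and the four-point condition makes it an ultrametric-like "closeness":
`(σ | σ') ≥ min (σ | τ) (τ | σ')`. For any `F` increasing on `[0, ∞)` the expression
`F |σ| + F |σ'| - 2 F |σ ∧ σ'|` is then a metric: after assuming `(σ | τ) ≤ (σ | σ')`, the
defect of the triangle inequality splits as `2 (F |τ| - F (τ | σ')) + 2 (F (σ | σ') - F (σ | τ))`,
a sum of two nonnegative terms. Here `F t = log (t + 1)`.
-/

open Set

noncomputable def gromovProduct {T : Type*} [MetricSpace T] (w x y : T) : ℝ :=
  (dist w x + dist w y - dist x y) / 2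

theorem min_gromovProduct_le {T : Type*} [MetricSpace T]
    (hfour : ∀ x y z w : T,
      dist x y + dist z w ≤ max (dist x z + dist y w) (dist x w + dist y z))
    (w x y z : T) :
    min (gromovProduct w x z) (gromovProduct w z y) ≤ gromovProduct w x y := by
  unfold gromovProduct
  rcases le_max_iff.mp (hfour x y z w) with h | h
  · refine min_le_of_left_le ?_
    linarith [dist_comm z w, dist_comm y w]
  · refine min_le_of_right_le ?_
    linarith [dist_comm z w, dist_comm x w, dist_comm y z]

noncomputable def distortedDist {T : Type*} [MetricSpace T] (F : ℝ → ℝ) (ρ : T)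
    (mrca : T → T → T) (σ σ' : T) : ℝ :=
  F (dist ρ σ) + F (dist ρ σ') - 2 * F (dist ρ (mrca σ σ'))

section RootedTree

variable {T : Type*} [MetricSpace T] {ρ : T} {mrca : T → T → T}

theorem dist_mrca_le_left (hgeo₁ : ∀ x y, dist ρ (mrca x y) + dist (mrca x y) x = dist ρ x)
    (x y : T) : dist ρ (mrca x y) ≤ dist ρ x := by
  linarith [hgeo₁ x y, dist_nonneg (x := mrca x y) (y := x)]

theorem dist_mrca_le_right (hgeo₁ : ∀ x y, dist ρ (mrca x y) + dist (mrca x y) x = dist ρ x)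
    (hsymm : ∀ x y, mrca x y = mrca y x) (x y : T) : dist ρ (mrca x y) ≤ dist ρ y :=
  hsymm x y ▸ dist_mrca_le_left hgeo₁ y x

theorem eq_of_dist_mrca_eq (hgeo₁ : ∀ x y, dist ρ (mrca x y) + dist (mrca x y) x = dist ρ x)
    (hsymm : ∀ x y, mrca x y = mrca y x) {x y : T}
    (hx : dist ρ (mrca x y) = dist ρ x) (hy : dist ρ (mrca x y) = dist ρ y) : x = y := by
  have hmx : mrca x y = x := dist_eq_zero.mp (by linarith [hgeo₁ x y])
  have hmy : mrca x y = y := dist_eq_zero.mp (by linarith [hsymm x y ▸ hgeo₁ y x])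
  exact hmx.symm.trans hmy

theorem mrca_self (hgromov : ∀ x y, dist ρ (mrca x y) = (dist ρ x + dist ρ y - dist x y) / 2)
    (hgeo₁ : ∀ x y, dist ρ (mrca x y) + dist (mrca x y) x = dist ρ x) (x : T) :
    mrca x x = x :=
  dist_eq_zero.mp (by linarith [hgeo₁ x x, hgromov x x, dist_self x])

variable {F : ℝ → ℝ}

theorem distortedDist_nonneg (hF : MonotoneOn F (Ici 0))
    (hgeo₁ : ∀ x y, dist ρ (mrca x y) + dist (mrca x y) x = dist ρ x)
    (hsymm : ∀ x y, mrca x y = mrca y x) (σ σ' : T) :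
    0 ≤ distortedDist F ρ mrca σ σ' := by
  have h₁ := hF dist_nonneg dist_nonneg (dist_mrca_le_left hgeo₁ σ σ')
  have h₂ := hF dist_nonneg dist_nonneg (dist_mrca_le_right hgeo₁ hsymm σ σ')
  unfold distortedDist
  linarith

theorem distortedDist_eq_zero_iff (hF : StrictMonoOn F (Ici 0))
    (hgromov : ∀ x y, dist ρ (mrca x y) = (dist ρ x + dist ρ y - dist x y) / 2)
    (hgeo₁ : ∀ x y, dist ρ (mrca x y) + dist (mrca x y) x = dist ρ x)
    (hsymm : ∀ x y, mrca x y = mrca y x) (σ σ' : T) :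
    distortedDist F ρ mrca σ σ' = 0 ↔ σ = σ' := by
  constructor
  · intro h
    have h₁ : F (dist ρ (mrca σ σ')) ≤ F (dist ρ σ) :=
      hF.monotoneOn dist_nonneg dist_nonneg (dist_mrca_le_left hgeo₁ σ σ')
    have h₂ : F (dist ρ (mrca σ σ')) ≤ F (dist ρ σ') :=
      hF.monotoneOn dist_nonneg dist_nonneg (dist_mrca_le_right hgeo₁ hsymm σ σ')
    unfold distortedDist at h
    refine eq_of_dist_mrca_eq hgeo₁ hsymm ?_ ?_ <;>
      exact hF.injOn (mem_Ici.mpr dist_nonneg) (mem_Ici.mpr dist_nonneg) (by linarith)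
  · rintro rfl
    simp only [distortedDist, mrca_self hgromov hgeo₁]
    ring

theorem distortedDist_comm (hsymm : ∀ x y, mrca x y = mrca y x) (σ σ' : T) :
    distortedDist F ρ mrca σ σ' = distortedDist F ρ mrca σ' σ := by
  unfold distortedDist
  rw [hsymm]
  ring

theorem distortedDist_triangle (hF : MonotoneOn F (Ici 0))
    (hfour : ∀ x y z w : T,
      dist x y + dist z w ≤ max (dist x z + dist y w) (dist x w + dist y z))
    (hgromov : ∀ x y, dist ρ (mrca x y) = (dist ρ x + dist ρ y - dist x y) / 2)
    (hgeo₁ : ∀ x y, dist ρ (mrca x y) + dist (mrca x y) x = dist ρ x)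
    (hsymm : ∀ x y, mrca x y = mrca y x) (σ τ σ' : T) :
    distortedDist F ρ mrca σ σ' ≤
      distortedDist F ρ mrca σ τ + distortedDist F ρ mrca τ σ' := by
  have hclose : min (dist ρ (mrca σ τ)) (dist ρ (mrca τ σ')) ≤ dist ρ (mrca σ σ') := by
    simpa only [hgromov, gromovProduct] using min_gromovProduct_le hfour ρ σ σ' τ
  have hmono {s t : ℝ} (hst : s ≤ t) (hs : 0 ≤ s) : F s ≤ F t :=
    hF hs (hs.trans hst) hst
  unfold distortedDist
  rcases min_le_iff.mp hclose with h | h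
  · linarith [hmono h dist_nonneg, hmono (dist_mrca_le_left hgeo₁ τ σ') dist_nonneg]
  · linarith [hmono h dist_nonneg, hmono (dist_mrca_le_right hgeo₁ hsymm σ τ) dist_nonneg]

end RootedTree

theorem strictMonoOn_log_add_one : StrictMonoOn (fun t ↦ Real.log (t + 1)) (Ici 0) :=
  fun s hs t _ hst ↦ Real.log_lt_log (by linarith [mem_Ici.mp hs]) (by linarith)

theorem distOne_is_metric {T : Type*} [MetricSpace T] (ρ : T) (mrca : T → T → T)
    (hfour : ∀ x y z w : T,
      dist x y + dist z w ≤ max (dist x z + dist y w) (dist x w + dist y z))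
    (hgromov : ∀ x y, dist ρ (mrca x y) = (dist ρ x + dist ρ y - dist x y) / 2)
    (hgeo₁ : ∀ x y, dist ρ (mrca x y) + dist (mrca x y) x = dist ρ x)
    (hsymm : ∀ x y, mrca x y = mrca y x) :
    (∀ σ σ' : T, 0 ≤ distOne ρ mrca σ σ') ∧
    (∀ σ σ' : T, distOne ρ mrca σ σ' = 0 ↔ σ = σ') ∧
    (∀ σ σ' : T, distOne ρ mrca σ σ' = distOne ρ mrca σ' σ) ∧
    (∀ σ τ σ' : T, distOne ρ mrca σ σ' ≤ distOne ρ mrca σ τ + distOne ρ mrca τ σ') := by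
  have hF := strictMonoOn_log_add_one
  have hdistOne : distOne ρ mrca = distortedDist (fun t ↦ Real.log (t + 1)) ρ mrca := rfl
  rw [hdistOne]
  exact ⟨distortedDist_nonneg hF.monotoneOn hgeo₁ hsymm,
    distortedDist_eq_zero_iff hF hgromov hgeo₁ hsymm,
    distortedDist_comm hsymm,
    distortedDist_triangle hF.monotoneOn hfour hgromov hgeo₁ hsymm⟩
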